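/- arXiv:1603.05434 — 6 statements merged into one kernel-verified Lean document; each statement's English description precedes it below -/
import Mathlib

section
/- With L smooth positive 1-homogeneous on ℝⁿ \ {0}, β linear, τ = β/L, *L = L·e^τ, lᵢ = ∂ᵢL, mᵢ = bᵢ − τlᵢ, and Lᵢⱼ = ∂ᵢ∂ⱼL, the second derivatives satisfy ∂ᵢ∂ⱼ(*L) = e^τ(1 − τ)Lᵢⱼ + (e^τ/L)·mᵢmⱼ. -/
/-- The `i`-th partial derivative of a function on `ℝⁿ`. -/
noncomputable def pd {n : ℕ} (i : Fin n) (f : (Fin n → ℝ) → ℝ) : (Fin n → ℝ) → ℝ :=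
  fun y => fderiv ℝ f y (Pi.single i 1)

/-- Second partial derivative `∂ᵢ∂ⱼ`. -/
noncomputable def pd2 {n : ℕ} (i j : Fin n) (f : (Fin n → ℝ) → ℝ) : (Fin n → ℝ) → ℝ :=
  pd i (pd j f)

/-- formula (2.2) of the paper, ρ = 0 case: for `*L = L·e^τ`,
`∂ᵢ∂ⱼ(*L) = e^τ(1 − τ) Lᵢⱼ + (e^τ/L) mᵢ mⱼ`, with `Lᵢⱼ = ∂ᵢ∂ⱼL`,
`mᵢ = bᵢ − τ ∂ᵢL`, `τ = β/L`. -/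
theorem exp_change_second_deriv {n : ℕ} (L : (Fin n → ℝ) → ℝ) (b : Fin n → ℝ)
    (β : (Fin n → ℝ) → ℝ)
    (hsmooth : ContDiffOn ℝ (⊤ : ℕ∞) L {y : Fin n → ℝ | y ≠ 0})
    (hpos : ∀ y : Fin n → ℝ, y ≠ 0 → 0 < L y)
    (hhom : ∀ y : Fin n → ℝ, y ≠ 0 → ∀ lam : ℝ, 0 < lam → L (lam • y) = lam * L y)
    (hβ : ∀ y : Fin n → ℝ, β y = ∑ i, b i * y i) :
    ∀ y : Fin n → ℝ, y ≠ 0 → ∀ i j : Fin n,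
      pd2 i j (fun z => L z * Real.exp (β z / L z)) y
        = Real.exp (β y / L y) * (1 - β y / L y) * pd2 i j L y
          + (Real.exp (β y / L y) / L y) *
              (b i - (β y / L y) * pd i L y) * (b j - (β y / L y) * pd j L y) := by
  classical
  set B : (Fin n → ℝ) →L[ℝ] ℝ := ∑ m, b m • (ContinuousLinearMap.proj m) with hB
  have hβfun : β = fun z => B z := by
    funext z
    rw [hβ]
    simp [hB, ContinuousLinearMap.sum_apply, mul_comm]
  have hBe : ∀ k : Fin n, B (Pi.single k 1) = b k := by
    intro k
    simp [hB, ContinuousLinearMap.sum_apply, Pi.single_apply]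
  have hU : IsOpen {y : Fin n → ℝ | y ≠ 0} := isOpen_ne
  -- first derivative formula, valid on the open set
  have key1 : ∀ z : Fin n → ℝ, z ≠ 0 → ∀ k : Fin n,
      pd k (fun w => L w * Real.exp (β w / L w)) z
        = Real.exp (β z / L z) * (pd k L z + (b k - (β z / L z) * pd k L z)) := by
    intro z hz k
    have hC : ContDiffAt ℝ (⊤ : ℕ∞) L z := hsmooth.contDiffAt (hU.mem_nhds hz)
    have hL : HasFDerivAt L (fderiv ℝ L z) z := (hC.differentiableAt (by simp)).hasFDerivAt
    have hLne : L z ≠ 0 := (hpos z hz).ne'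
    have hβ' : HasFDerivAt β B z := by rw [hβfun]; exact B.hasFDerivAt
    have hinv : HasFDerivAt (fun w => (L w)⁻¹) (-(L z ^ 2)⁻¹ • fderiv ℝ L z) z :=
      (hasDerivAt_inv hLne).comp_hasFDerivAt z hL
    have hτ : HasFDerivAt (fun w => β w / L w)
        (β z • (-(L z ^ 2)⁻¹ • fderiv ℝ L z) + (L z)⁻¹ • B) z := by
      simp only [div_eq_mul_inv]
      exact hβ'.mul hinv
    have hmul : HasFDerivAt (fun w => L w * Real.exp (β w / L w)) _ z := hL.mul hτ.exp
    have hrw : pd k (fun w => L w * Real.exp (β w / L w)) z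
        = (fderiv ℝ (fun w => L w * Real.exp (β w / L w)) z) (Pi.single k 1) := rfl
    rw [hrw, hmul.fderiv]
    simp only [ContinuousLinearMap.add_apply, ContinuousLinearMap.smul_apply, smul_eq_mul,
      hBe, pd]
    field_simp
    ring
  intro y hy i j
  -- data at y
  have hC : ContDiffAt ℝ (⊤ : ℕ∞) L y := hsmooth.contDiffAt (hU.mem_nhds hy)
  have hL : HasFDerivAt L (fderiv ℝ L y) y := (hC.differentiableAt (by simp)).hasFDerivAt
  have hLne : L y ≠ 0 := (hpos y hy).ne'
  have hβ' : HasFDerivAt β B y := by rw [hβfun]; exact B.hasFDerivAt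
  have hinv : HasFDerivAt (fun w => (L w)⁻¹) (-(L y ^ 2)⁻¹ • fderiv ℝ L y) y :=
    (hasDerivAt_inv hLne).comp_hasFDerivAt y hL
  have hτ : HasFDerivAt (fun w => β w / L w)
      (β y • (-(L y ^ 2)⁻¹ • fderiv ℝ L y) + (L y)⁻¹ • B) y := by
    simp only [div_eq_mul_inv]
    exact hβ'.mul hinv
  -- the function ℓ = pd j L is differentiable at y
  have hC' : ContDiffAt ℝ (⊤ : ℕ∞) (fderiv ℝ L) y := hC.fderiv_right (by simp)
  have hℓd : DifferentiableAt ℝ (fun z => (fderiv ℝ L z) (Pi.single j 1)) y :=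
    (hC'.differentiableAt (by simp)).clm_apply (differentiableAt_const _)
  have hℓ : HasFDerivAt (fun z => (fderiv ℝ L z) (Pi.single j 1))
      (fderiv ℝ (fun z => (fderiv ℝ L z) (Pi.single j 1)) y) y := hℓd.hasFDerivAt
  -- G : the first-derivative expression as a function of z
  set τ' : (Fin n → ℝ) →L[ℝ] ℝ :=
    β y • (-(L y ^ 2)⁻¹ • fderiv ℝ L y) + (L y)⁻¹ • B with hτ'def
  set ℓ' : (Fin n → ℝ) →L[ℝ] ℝ :=
    fderiv ℝ (fun z => (fderiv ℝ L z) (Pi.single j 1)) y with hℓ'def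
  have hH : HasFDerivAt
      (fun z => (fderiv ℝ L z) (Pi.single j 1)
          + (b j - (β z / L z) * (fderiv ℝ L z) (Pi.single j 1)))
      (ℓ' + (0 - ((β y / L y) • ℓ' + ((fderiv ℝ L y) (Pi.single j 1)) • τ'))) y :=
    hℓ.add ((hasFDerivAt_const (b j) y).sub (hτ.mul hℓ))
  have hG : HasFDerivAt
      (fun z => Real.exp (β z / L z) * ((fderiv ℝ L z) (Pi.single j 1)
          + (b j - (β z / L z) * (fderiv ℝ L z) (Pi.single j 1))))
      (Real.exp (β y / L y) •
          (ℓ' + (0 - ((β y / L y) • ℓ' + ((fderiv ℝ L y) (Pi.single j 1)) • τ')))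
        + ((fderiv ℝ L y) (Pi.single j 1)
            + (b j - (β y / L y) * (fderiv ℝ L y) (Pi.single j 1))) •
            (Real.exp (β y / L y) • τ')) y := hτ.exp.mul hH
  -- identify pd2 of *L with pd i of G
  have heq : pd j (fun w => L w * Real.exp (β w / L w))
      =ᶠ[nhds y] fun z => Real.exp (β z / L z) * ((fderiv ℝ L z) (Pi.single j 1)
          + (b j - (β z / L z) * (fderiv ℝ L z) (Pi.single j 1))) := by
    filter_upwards [hU.eventually_mem hy] with z hz
    exact key1 z hz j
  have hmain : pd2 i j (fun z => L z * Real.exp (β z / L z)) y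
      = (fderiv ℝ (fun z => Real.exp (β z / L z) * ((fderiv ℝ L z) (Pi.single j 1)
          + (b j - (β z / L z) * (fderiv ℝ L z) (Pi.single j 1)))) y) (Pi.single i 1) := by
    show (fderiv ℝ (pd j fun z => L z * Real.exp (β z / L z)) y) (Pi.single i 1) = _
    rw [heq.fderiv_eq]
  rw [hmain, hG.fderiv]
  have hpd2 : pd2 i j L y = ℓ' (Pi.single i 1) := rfl
  have hpdi : pd i L y = (fderiv ℝ L y) (Pi.single i 1) := rfl
  have hpdj : pd j L y = (fderiv ℝ L y) (Pi.single j 1) := rfl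
  simp only [ContinuousLinearMap.add_apply, ContinuousLinearMap.sub_apply,
    ContinuousLinearMap.smul_apply, ContinuousLinearMap.zero_apply, smul_eq_mul,
    hτ'def, hBe, hpd2, hpdi, hpdj]
  field_simp
  ring
end

section
/- Let L be smooth positive 1-homogeneous on ℝⁿ \ {0}, β linear, τ = β/L, *L = L·e^τ, gᵢⱼ = ½∂ᵢ∂ⱼL², lᵢ = ∂ᵢL. Then the fundamental tensor of *L satisfies *gᵢⱼ = ν e^{2τ} gᵢⱼ + e^{2τ}(2τ² − τ − ρ)lᵢlⱼ + e^{2τ}(1−2τ)(bᵢlⱼ + bⱼlᵢ) + 2e^{2τ}bᵢbⱼ, where ν = 1 + ρ − τ and ρ = 0 in the case of constant b. -/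
noncomputable def Bmap {n : ℕ} (b : Fin n → ℝ) : (Fin n → ℝ) →L[ℝ] ℝ :=
  ∑ i, b i • (ContinuousLinearMap.proj i)

lemma Bmap_apply {n : ℕ} (b v : Fin n → ℝ) : Bmap b v = ∑ i, b i * v i := by
  simp [Bmap]

lemma Bmap_single {n : ℕ} (b : Fin n → ℝ) (j : Fin n) : Bmap b (Pi.single j 1) = b j := by
  simp [Bmap_apply, Pi.single_apply, mul_ite]

/-- formula (2.5) of the paper with ρ = 0, ν = 1 − τ:
the fundamental tensor of `*L = L e^τ` satisfies
`*gᵢⱼ = (1−τ)e^{2τ}gᵢⱼ + e^{2τ}(2τ²−τ)lᵢlⱼ + e^{2τ}(1−2τ)(bᵢlⱼ+bⱼlᵢ) + 2e^{2τ}bᵢbⱼ`. -/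
theorem exp_change_metric_tensor {n : ℕ} (L : (Fin n → ℝ) → ℝ) (b : Fin n → ℝ)
    (β : (Fin n → ℝ) → ℝ)
    (hsmooth : ContDiffOn ℝ (⊤ : ℕ∞) L {y : Fin n → ℝ | y ≠ 0})
    (hpos : ∀ y : Fin n → ℝ, y ≠ 0 → 0 < L y)
    (hhom : ∀ y : Fin n → ℝ, y ≠ 0 → ∀ lam : ℝ, 0 < lam → L (lam • y) = lam * L y)
    (hβ : ∀ y : Fin n → ℝ, β y = ∑ i, b i * y i) :
    ∀ y : Fin n → ℝ, y ≠ 0 → ∀ i j : Fin n,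
      (1 / 2) * pd2 i j (fun z => (L z * Real.exp (β z / L z)) ^ 2) y
        = (1 - β y / L y) * Real.exp (2 * (β y / L y)) *
              ((1 / 2) * pd2 i j (fun z => (L z) ^ 2) y)
          + Real.exp (2 * (β y / L y)) *
              (2 * (β y / L y) ^ 2 - β y / L y) * pd i L y * pd j L y
          + Real.exp (2 * (β y / L y)) * (1 - 2 * (β y / L y)) *
              (b i * pd j L y + b j * pd i L y)
          + 2 * Real.exp (2 * (β y / L y)) * b i * b j := by
  intro y hy i j
  have hS : IsOpen {z : Fin n → ℝ | z ≠ 0} := isOpen_ne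
  have hβd : ∀ z : Fin n → ℝ, HasFDerivAt β (Bmap b) z := by
    have hfun : β = fun z => Bmap b z := funext fun z => by rw [hβ, Bmap_apply]
    intro z; rw [hfun]; exact (Bmap b).hasFDerivAt
  have hLd : ∀ z : Fin n → ℝ, z ≠ 0 → ContDiffAt ℝ (⊤ : ℕ∞) L z :=
    fun z hz => hsmooth.contDiffAt (hS.mem_nhds hz)
  have hLne : ∀ z : Fin n → ℝ, z ≠ 0 → L z ≠ 0 := fun z hz => (hpos z hz).ne'
  have hLfd : ∀ z : Fin n → ℝ, z ≠ 0 → HasFDerivAt L (fderiv ℝ L z) z :=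
    fun z hz => ((hLd z hz).differentiableAt (by simp)).hasFDerivAt
  -- derivative of τ = β / L
  have hdiv : ∀ z : Fin n → ℝ, z ≠ 0 → HasFDerivAt (fun w => β w / L w)
      (β z • ((-(L z ^ 2)⁻¹) • fderiv ℝ L z) + (L z)⁻¹ • Bmap b) z := by
    intro z hz
    have h := (hβd z).mul ((hasDerivAt_inv (hLne z hz)).comp_hasFDerivAt z (hLfd z hz))
    simp only [div_eq_mul_inv]
    exact h
  -- the function lⱼ
  set lj : (Fin n → ℝ) → ℝ := fun z => fderiv ℝ L z (Pi.single j 1) with hljdef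
  have hljc : ContDiffAt ℝ (⊤ : ℕ∞) lj y :=
    ((hLd y hy).fderiv_right (by simp)).clm_apply contDiffAt_const
  have hljfd : HasFDerivAt lj (fderiv ℝ lj y) y :=
    (hljc.differentiableAt (by simp)).hasFDerivAt
  -- first derivative of *L²
  have key : ∀ z : Fin n → ℝ, z ≠ 0 →
      pd j (fun w => (L w * Real.exp (β w / L w)) ^ 2) z
        = 2 * L z * Real.exp (2 * (β z / L z)) *
            ((1 - β z / L z) * fderiv ℝ L z (Pi.single j 1) + b j) := by
    intro z hz
    have hne := hLne z hz
    have hmul := (hLfd z hz).mul (hdiv z hz).exp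
    have hpow := (hasDerivAt_pow 2 (L z * Real.exp (β z / L z))).comp_hasFDerivAt z hmul
    have hfun : (fun w => (L w * Real.exp (β w / L w)) ^ 2)
        = (fun t => t ^ 2) ∘ (fun w => L w * Real.exp (β w / L w)) := rfl
    have hpow' : HasFDerivAt ((fun t => t ^ 2) ∘ (fun w => L w * Real.exp (β w / L w))) _ z := hpow
    simp only [pd, hfun, hpow'.fderiv]
    simp only [ContinuousLinearMap.smul_apply, ContinuousLinearMap.add_apply,
      Bmap_single, smul_eq_mul, pow_one, Nat.cast_ofNat]
    rw [two_mul (β z / L z), Real.exp_add]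
    field_simp
    ring
  -- first derivative of L²
  have keyL : ∀ z : Fin n → ℝ, z ≠ 0 →
      pd j (fun w => (L w) ^ 2) z = 2 * L z * fderiv ℝ L z (Pi.single j 1) := by
    intro z hz
    have hpow := (hasDerivAt_pow 2 (L z)).comp_hasFDerivAt z (hLfd z hz)
    have hfun : (fun w => (L w) ^ 2) = (fun t => t ^ 2) ∘ L := rfl
    simp only [pd, hfun, hpow.fderiv]
    simp only [ContinuousLinearMap.smul_apply, smul_eq_mul, pow_one, Nat.cast_ofNat]
    ring
  -- second derivatives via eventual equality
  have hmem : {z : Fin n → ℝ | z ≠ 0} ∈ nhds y := hS.mem_nhds hy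
  have heq1 : pd j (fun w => (L w * Real.exp (β w / L w)) ^ 2)
      =ᶠ[nhds y] fun z => 2 * L z * Real.exp (2 * (β z / L z)) *
            ((1 - β z / L z) * lj z + b j) :=
    Filter.eventuallyEq_of_mem hmem key
  have heq2 : pd j (fun w => (L w) ^ 2) =ᶠ[nhds y] fun z => 2 * L z * lj z :=
    Filter.eventuallyEq_of_mem hmem keyL
  have hLy := hLfd y hy
  have hne := hLne y hy
  have hdy := hdiv y hy
  have hG := ((hLy.const_mul 2).mul (hdy.const_mul 2).exp).mul
      ((((hasFDerivAt_const (1:ℝ) y).sub hdy).mul hljfd).add_const (b j))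
  have hG2 := (hLy.const_mul 2).mul hljfd
  have e1 : pd2 i j (fun w => (L w * Real.exp (β w / L w)) ^ 2) y
      = fderiv ℝ (fun z => 2 * L z * Real.exp (2 * (β z / L z)) *
          ((1 - β z / L z) * lj z + b j)) y (Pi.single i 1) := by
    simp only [pd2, pd, heq1.fderiv_eq]
  have e2 : pd2 i j (fun w => (L w) ^ 2) y
      = fderiv ℝ (fun z => 2 * L z * lj z) y (Pi.single i 1) := by
    simp only [pd2, pd, heq2.fderiv_eq]
  have hG' : HasFDerivAt (fun z => 2 * L z * Real.exp (2 * (β z / L z)) *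
      ((1 - β z / L z) * lj z + b j)) _ y := hG
  have hG2' : HasFDerivAt (fun z => 2 * L z * lj z) _ y := hG2
  rw [e1, e2, hG'.fderiv, hG2'.fderiv]
  simp only [ContinuousLinearMap.smul_apply, ContinuousLinearMap.add_apply,
    ContinuousLinearMap.sub_apply, ContinuousLinearMap.zero_apply, Bmap_single,
    smul_eq_mul, pd]
  simp only [Pi.mul_apply, Pi.sub_apply, hljdef]
  rw [two_mul (β y / L y), Real.exp_add]
  field_simp
  ring
end

section
/- Let L be smooth positive 1-homogeneous on ℝⁿ \ {0} with β linear, τ = β/L, ν = 1 − τ, mᵢ = bᵢ − τlᵢ, hᵢⱼ = L∂ᵢ∂ⱼL, Cᵢⱼₖ = ¼∂ᵢ∂ⱼ∂ₖ(L²). Then the Cartan tensor of *L = Le^τ satisfies *Cᵢⱼₖ = ν e^{2τ}Cᵢⱼₖ + (2/L)e^{2τ}mᵢmⱼmₖ + (1/(2L))e^{2τ}(2ν−1)(mᵢhₖⱼ + mⱼhₖᵢ + mₖhᵢⱼ). -/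
/-- Third partial derivative `∂ᵢ∂ⱼ∂ₖ`. -/
noncomputable def pd3 {n : ℕ} (i j k : Fin n) (f : (Fin n → ℝ) → ℝ) : (Fin n → ℝ) → ℝ :=
  pd i (pd j (pd k f))

section HasPDCalculus

variable {n : ℕ}

/-- `f` has `i`-th partial derivative `v` at `y`. -/
def HasPD (i : Fin n) (f : (Fin n → ℝ) → ℝ) (y : Fin n → ℝ) (v : ℝ) : Prop :=
  ∃ D : (Fin n → ℝ) →L[ℝ] ℝ, HasFDerivAt f D y ∧ D (Pi.single i 1) = v

theorem DifferentiableAt.hasPD {f : (Fin n → ℝ) → ℝ} {y : Fin n → ℝ}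
    (hf : DifferentiableAt ℝ f y) (i : Fin n) : HasPD i f y (pd i f y) :=
  ⟨fderiv ℝ f y, hf.hasFDerivAt, rfl⟩

namespace HasPD

variable {i : Fin n} {f g : (Fin n → ℝ) → ℝ} {y : Fin n → ℝ} {u v : ℝ}

theorem eq (h : HasPD i f y v) : pd i f y = v := by
  obtain ⟨D, hD, hv⟩ := h
  show fderiv ℝ f y (Pi.single i 1) = v
  rw [hD.fderiv]; exact hv

theorem differentiableAt (h : HasPD i f y v) : DifferentiableAt ℝ f y := by
  obtain ⟨D, hD, -⟩ := h
  exact hD.differentiableAt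

theorem add (hf : HasPD i f y u) (hg : HasPD i g y v) :
    HasPD i (fun z => f z + g z) y (u + v) := by
  obtain ⟨D, hD, h1⟩ := hf; obtain ⟨E, hE, h2⟩ := hg
  exact ⟨D + E, hD.add hE, by simp [h1, h2]⟩

theorem sub (hf : HasPD i f y u) (hg : HasPD i g y v) :
    HasPD i (fun z => f z - g z) y (u - v) := by
  obtain ⟨D, hD, h1⟩ := hf; obtain ⟨E, hE, h2⟩ := hg
  exact ⟨D - E, hD.sub hE, by simp [h1, h2]⟩

theorem mul (hf : HasPD i f y u) (hg : HasPD i g y v) :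
    HasPD i (fun z => f z * g z) y (f y * v + u * g y) := by
  obtain ⟨D, hD, h1⟩ := hf; obtain ⟨E, hE, h2⟩ := hg
  refine ⟨f y • E + g y • D, hD.mul hE, ?_⟩
  simp only [ContinuousLinearMap.add_apply, ContinuousLinearMap.coe_smul', Pi.smul_apply,
    smul_eq_mul, h1, h2]
  ring

theorem const_mul (hf : HasPD i f y u) (c : ℝ) :
    HasPD i (fun z => c * f z) y (c * u) := by
  obtain ⟨D, hD, h1⟩ := hf
  exact ⟨c • D, hD.const_mul c, by simp [h1]⟩

theorem exp (hf : HasPD i f y u) :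
    HasPD i (fun z => Real.exp (f z)) y (Real.exp (f y) * u) := by
  obtain ⟨D, hD, h1⟩ := hf
  exact ⟨Real.exp (f y) • D, hD.exp, by simp [h1]⟩

theorem inv (hf : HasPD i f y u) (h0 : f y ≠ 0) :
    HasPD i (fun z => (f z)⁻¹) y (-(f y ^ 2)⁻¹ * u) := by
  obtain ⟨D, hD, h1⟩ := hf
  refine ⟨-((f y ^ 2)⁻¹ • D), ?_, by simp [h1]⟩
  have := (hasDerivAt_inv h0).comp_hasFDerivAt y hD
  simpa [Function.comp_def] using this

end HasPD

theorem hasPD_linear (b : Fin n → ℝ) (i : Fin n) (y : Fin n → ℝ) :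
    HasPD i (fun z : Fin n → ℝ => ∑ t, b t * z t) y (b i) := by
  classical
  refine ⟨∑ t, b t • (ContinuousLinearMap.proj t : (Fin n → ℝ) →L[ℝ] ℝ), ?_, ?_⟩
  · have hfun : (fun z : Fin n → ℝ => ∑ t, b t * z t)
        = ⇑(∑ t, b t • (ContinuousLinearMap.proj t : (Fin n → ℝ) →L[ℝ] ℝ)) := by
      funext z
      simp [ContinuousLinearMap.sum_apply, ContinuousLinearMap.proj_apply]
    rw [hfun]
    exact ContinuousLinearMap.hasFDerivAt _
  · simp [ContinuousLinearMap.sum_apply, ContinuousLinearMap.proj_apply, Pi.single_apply,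
      mul_ite, Finset.sum_ite_eq']

/-- Congruence for `pd` on an open set. -/
theorem pd_congr_open {U : Set (Fin n → ℝ)} (hU : IsOpen U) {y : Fin n → ℝ} (hy : y ∈ U)
    {f g : (Fin n → ℝ) → ℝ} (h : ∀ z ∈ U, f z = g z) (i : Fin n) : pd i f y = pd i g y := by
  show fderiv ℝ f y (Pi.single i 1) = fderiv ℝ g y (Pi.single i 1)
  rw [Filter.EventuallyEq.fderiv_eq (Filter.eventually_of_mem (hU.mem_nhds hy) h)]

/-- Schwarz symmetry of second partials for functions smooth on an open set. -/
theorem pd2_symm_open {U : Set (Fin n → ℝ)} (hU : IsOpen U) {L : (Fin n → ℝ) → ℝ}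
    (hL : ContDiffOn ℝ (⊤ : ℕ∞) L U) {y : Fin n → ℝ} (hy : y ∈ U) (a c : Fin n) :
    pd a (pd c L) y = pd c (pd a L) y := by
  have hev : ∀ᶠ z in nhds y, HasFDerivAt L (fderiv ℝ L z) z := by
    filter_upwards [hU.mem_nhds hy] with z hz
    exact ((hL.contDiffAt (hU.mem_nhds hz)).differentiableAt (by simp)).hasFDerivAt
  have hf' : DifferentiableAt ℝ (fderiv ℝ L) y :=
    ((hL.fderiv_of_isOpen hU (by exact WithTop.coe_le_coe.mpr le_top)).contDiffAt (hU.mem_nhds hy)).differentiableAt one_ne_zero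
  have h2 := hf'.hasFDerivAt
  have key : ∀ c a : Fin n,
      pd a (pd c L) y = (fderiv ℝ (fderiv ℝ L) y (Pi.single a 1)) (Pi.single c 1) := by
    intro c a
    have hc : HasFDerivAt (fun z => fderiv ℝ L z (Pi.single c 1))
        (((fderiv ℝ L y).comp (0 : (Fin n → ℝ) →L[ℝ] (Fin n → ℝ)))
          + (fderiv ℝ (fderiv ℝ L) y).flip (Pi.single c 1)) y :=
      h2.clm_apply (hasFDerivAt_const _ _)
    have : HasPD a (fun z => fderiv ℝ L z (Pi.single c 1)) y
        ((fderiv ℝ (fderiv ℝ L) y (Pi.single a 1)) (Pi.single c 1)) := by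
      refine ⟨_, hc, ?_⟩
      simp
    exact this.eq
  rw [key c a, key a c]
  exact second_derivative_symmetric_of_eventually hev h2 _ _

end HasPDCalculus

/-- formula (2.6) of the paper with ρ = 0, ν = 1 − τ: the Cartan
tensor `*Cᵢⱼₖ = ¼∂ᵢ∂ⱼ∂ₖ(*L²)` of the exponential change `*L = L e^τ` satisfies
`*Cᵢⱼₖ = ν e^{2τ}Cᵢⱼₖ + (2/L)e^{2τ}mᵢmⱼmₖ
        + (1/(2L))e^{2τ}(2ν−1)(mᵢhₖⱼ + mⱼhₖᵢ + mₖhᵢⱼ)`,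
where `Cᵢⱼₖ = ¼∂ᵢ∂ⱼ∂ₖ(L²)`, `mᵢ = bᵢ − τ∂ᵢL`, `hᵢⱼ = L∂ᵢ∂ⱼL`. -/
theorem exp_change_cartan_tensor {n : ℕ} (L : (Fin n → ℝ) → ℝ) (b : Fin n → ℝ)
    (β : (Fin n → ℝ) → ℝ)
    (hsmooth : ContDiffOn ℝ (⊤ : ℕ∞) L {y : Fin n → ℝ | y ≠ 0})
    (hpos : ∀ y : Fin n → ℝ, y ≠ 0 → 0 < L y)
    (hhom : ∀ y : Fin n → ℝ, y ≠ 0 → ∀ lam : ℝ, 0 < lam → L (lam • y) = lam * L y)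
    (hβ : ∀ y : Fin n → ℝ, β y = ∑ i, b i * y i) :
    ∀ y : Fin n → ℝ, y ≠ 0 → ∀ i j k : Fin n,
      let τ := β y / L y
      let ν := 1 - τ
      let m := fun i : Fin n => b i - τ * pd i L y
      let h := fun i j : Fin n => L y * pd2 i j L y
      (1 / 4) * pd3 i j k (fun z => (L z * Real.exp (β z / L z)) ^ 2) y
        = ν * Real.exp (2 * τ) * ((1 / 4) * pd3 i j k (fun z => (L z) ^ 2) y)
          + (2 / L y) * Real.exp (2 * τ) * (m i * m j * m k)
          + (1 / (2 * L y)) * Real.exp (2 * τ) * (2 * ν - 1) *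
              (m i * h k j + m j * h k i + m k * h i j) := by
  intro y hy i j k
  dsimp only
  set U : Set (Fin n → ℝ) := {y : Fin n → ℝ | y ≠ 0} with hUdef
  have hU : IsOpen U := isOpen_ne
  have hyU : y ∈ U := hy
  -- differentiability of the atoms
  have hdiff : ∀ f : (Fin n → ℝ) → ℝ, ContDiffOn ℝ (⊤ : ℕ∞) f U → ∀ z ∈ U, DifferentiableAt ℝ f z :=
    fun f hf z hz => (hf.contDiffAt (hU.mem_nhds hz)).differentiableAt (by simp)
  have hC1 : ∀ c : Fin n, ContDiffOn ℝ (⊤ : ℕ∞) (pd c L) U := fun c =>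
    (hsmooth.fderiv_of_isOpen hU (by simp)).clm_apply contDiffOn_const
  have hC2 : ∀ c d : Fin n, ContDiffOn ℝ (⊤ : ℕ∞) (pd c (pd d L)) U := fun c d =>
    ((hC1 d).fderiv_of_isOpen hU (by simp)).clm_apply contDiffOn_const
  have Hβ : ∀ (z : Fin n → ℝ) (c : Fin n), HasPD c β z (b c) := by
    intro z c
    have hfun : β = fun w : Fin n → ℝ => ∑ t, b t * w t := funext hβ
    rw [hfun]
    exact hasPD_linear b c z
  -- rewrite the function (L·e^{β/L})² into product form
  have hE0 : (fun z => (L z * Real.exp (β z / L z)) ^ 2)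
      = fun z => L z * L z * Real.exp (2 * (β z * (L z)⁻¹)) := by
    funext z
    rw [div_eq_mul_inv, mul_pow, sq (Real.exp _), ← Real.exp_add, ← two_mul, sq]
  have hL2fun : (fun z => (L z) ^ 2) = fun z => L z * L z := by
    funext z; rw [sq]
  -- Stage 1 for *L²
  have h1 : ∀ z ∈ U, pd k (fun w => L w * L w * Real.exp (2 * (β w * (L w)⁻¹))) z
      = Real.exp (2 * (β z * (L z)⁻¹))
          * (2 * L z * pd k L z + 2 * b k * L z - 2 * β z * pd k L z) := by
    intro z hz
    have hL0 : L z ≠ 0 := (hpos z hz).ne'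
    have HL := (hdiff L hsmooth z hz).hasPD k
    have hbig : HasPD k (fun w => L w * L w * Real.exp (2 * (β w * (L w)⁻¹))) z _ :=
      (HL.mul HL).mul (((Hβ z k).mul (HL.inv hL0)).const_mul 2).exp
    rw [hbig.eq]
    field_simp
    ring
  -- Stage 2 for *L²
  have h2 : ∀ z ∈ U, pd j (fun w => Real.exp (2 * (β w * (L w)⁻¹))
        * (2 * L w * pd k L w + 2 * b k * L w - 2 * β w * pd k L w)) z
      = Real.exp (2 * (β z * (L z)⁻¹))
          * ((2 * b j * L z - 2 * β z * pd j L z)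
              * (2 * L z * pd k L z + 2 * b k * L z - 2 * β z * pd k L z)
              * ((L z)⁻¹ * (L z)⁻¹)
            + (2 * pd j L z * pd k L z + 2 * L z * pd j (pd k L) z
                + 2 * b k * pd j L z - 2 * b j * pd k L z - 2 * β z * pd j (pd k L) z)) := by
    intro z hz
    have hL0 : L z ≠ 0 := (hpos z hz).ne'
    have HL := (hdiff L hsmooth z hz).hasPD j
    have HPk := (hdiff _ (hC1 k) z hz).hasPD j
    have hbig : HasPD j (fun w => Real.exp (2 * (β w * (L w)⁻¹))
        * (2 * L w * pd k L w + 2 * b k * L w - 2 * β w * pd k L w)) z _ :=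
      ((((Hβ z j).mul (HL.inv hL0)).const_mul 2).exp).mul
        ((((HL.const_mul 2).mul HPk).add (HL.const_mul (2 * b k))).sub
          (((Hβ z j).const_mul 2).mul HPk))
    rw [hbig.eq]
    field_simp
    ring
  -- chain stages for *L²
  have hstar2 : pd j (pd k (fun w => L w * L w * Real.exp (2 * (β w * (L w)⁻¹)))) y
      = pd j (fun w => Real.exp (2 * (β w * (L w)⁻¹))
          * (2 * L w * pd k L w + 2 * b k * L w - 2 * β w * pd k L w)) y :=
    pd_congr_open hU hyU h1 j
  have hstar2' : ∀ z ∈ U,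
      pd j (pd k (fun w => L w * L w * Real.exp (2 * (β w * (L w)⁻¹)))) z
      = Real.exp (2 * (β z * (L z)⁻¹))
          * ((2 * b j * L z - 2 * β z * pd j L z)
              * (2 * L z * pd k L z + 2 * b k * L z - 2 * β z * pd k L z)
              * ((L z)⁻¹ * (L z)⁻¹)
            + (2 * pd j L z * pd k L z + 2 * L z * pd j (pd k L) z
                + 2 * b k * pd j L z - 2 * b j * pd k L z - 2 * β z * pd j (pd k L) z)) := by
    intro z hz
    rw [pd_congr_open hU hz h1 j, h2 z hz]
  -- Stage 3 for *L²
  have hL0 : L y ≠ 0 := (hpos y hy).ne'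
  have HL := (hdiff L hsmooth y hyU).hasPD i
  have HPj := (hdiff _ (hC1 j) y hyU).hasPD i
  have HPk := (hdiff _ (hC1 k) y hyU).hasPD i
  have HQjk := (hdiff _ (hC2 j k) y hyU).hasPD i
  have hstar3 : pd i (pd j (pd k (fun w => L w * L w * Real.exp (2 * (β w * (L w)⁻¹))))) y
      = pd i (fun z => Real.exp (2 * (β z * (L z)⁻¹))
          * ((2 * b j * L z - 2 * β z * pd j L z)
              * (2 * L z * pd k L z + 2 * b k * L z - 2 * β z * pd k L z)
              * ((L z)⁻¹ * (L z)⁻¹)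
            + (2 * pd j L z * pd k L z + 2 * L z * pd j (pd k L) z
                + 2 * b k * pd j L z - 2 * b j * pd k L z - 2 * β z * pd j (pd k L) z))) y :=
    pd_congr_open hU hyU hstar2' i
  have hbig3 : HasPD i (fun z => Real.exp (2 * (β z * (L z)⁻¹))
      * ((2 * b j * L z - 2 * β z * pd j L z)
          * (2 * L z * pd k L z + 2 * b k * L z - 2 * β z * pd k L z)
          * ((L z)⁻¹ * (L z)⁻¹)
        + (2 * pd j L z * pd k L z + 2 * L z * pd j (pd k L) z
            + 2 * b k * pd j L z - 2 * b j * pd k L z - 2 * β z * pd j (pd k L) z))) y _ :=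
    ((((Hβ y i).mul (HL.inv hL0)).const_mul 2).exp).mul
      (((((HL.const_mul (2 * b j)).sub (((Hβ y i).const_mul 2).mul HPj)).mul
          ((((HL.const_mul 2).mul HPk).add (HL.const_mul (2 * b k))).sub
            (((Hβ y i).const_mul 2).mul HPk))).mul
        ((HL.inv hL0).mul (HL.inv hL0))).add
        ((((((HPj.const_mul 2).mul HPk).add ((HL.const_mul 2).mul HQjk)).add
            (HPj.const_mul (2 * b k))).sub (HPk.const_mul (2 * b j))).sub
          (((Hβ y i).const_mul 2).mul HQjk)))
  -- Stages for L²
  have g1 : ∀ z ∈ U, pd k (fun w => L w * L w) z = 2 * L z * pd k L z := by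
    intro z hz
    have HL := (hdiff L hsmooth z hz).hasPD k
    have hbig : HasPD k (fun w => L w * L w) z _ := HL.mul HL
    rw [hbig.eq]; ring
  have g2 : ∀ z ∈ U, pd j (fun w => 2 * L w * pd k L w) z
      = 2 * pd j L z * pd k L z + 2 * L z * pd j (pd k L) z := by
    intro z hz
    have HL := (hdiff L hsmooth z hz).hasPD j
    have HPk := (hdiff _ (hC1 k) z hz).hasPD j
    have hbig : HasPD j (fun w => 2 * L w * pd k L w) z _ := (HL.const_mul 2).mul HPk
    rw [hbig.eq]; ring
  have gsq2 : ∀ z ∈ U, pd j (pd k (fun w => L w * L w)) z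
      = 2 * pd j L z * pd k L z + 2 * L z * pd j (pd k L) z := by
    intro z hz
    rw [pd_congr_open hU hz g1 j, g2 z hz]
  have gsq3 : pd i (pd j (pd k (fun w => L w * L w))) y
      = pd i (fun z => 2 * pd j L z * pd k L z + 2 * L z * pd j (pd k L) z) y :=
    pd_congr_open hU hyU gsq2 i
  have hbigg : HasPD i (fun z => 2 * pd j L z * pd k L z + 2 * L z * pd j (pd k L) z) y _ :=
    ((HPj.const_mul 2).mul HPk).add ((HL.const_mul 2).mul HQjk)
  -- symmetry of second partials
  have hskj : pd k (pd j L) y = pd j (pd k L) y := pd2_symm_open hU hsmooth hyU k j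
  have hski : pd k (pd i L) y = pd i (pd k L) y := pd2_symm_open hU hsmooth hyU k i
  -- put everything together
  simp only [pd3, pd2, hE0, hL2fun]
  rw [hstar3, hbig3.eq, gsq3, hbigg.eq, hskj, hski]
  rw [div_eq_mul_inv (β y) (L y)]
  field_simp
  ring
end

section
/- Third derivatives of the exponential change: with the notation above, ∂ᵢ∂ⱼ∂ₖ(*L) = e^τ(1−τ)Lᵢⱼₖ − τ(e^τ/L)[mᵢLⱼₖ + mⱼLᵢₖ + mₖLᵢⱼ] − (e^τ/L²)[mⱼmₖlᵢ + mᵢmₖlⱼ + mᵢmⱼlₖ − mᵢmⱼmₖ], where Lᵢⱼₖ = ∂ᵢ∂ⱼ∂ₖL. -/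
section rules
variable {n : ℕ} {f g : (Fin n → ℝ) → ℝ} {z : Fin n → ℝ} {i : Fin n}

lemma pd_congr_on {U : Set (Fin n → ℝ)} (hU : IsOpen U) (h : ∀ w ∈ U, f w = g w)
    (hz : z ∈ U) (i : Fin n) : pd i f z = pd i g z := by
  unfold pd
  rw [Filter.EventuallyEq.fderiv_eq ?_]
  filter_upwards [hU.mem_nhds hz] with w hw using h w hw

lemma pd_mul (hf : DifferentiableAt ℝ f z) (hg : DifferentiableAt ℝ g z) :
    pd i (fun x => f x * g x) z = pd i f z * g z + f z * pd i g z := by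
  unfold pd
  rw [fderiv_fun_mul hf hg]
  simp; ring

lemma pd_exp (hf : DifferentiableAt ℝ f z) :
    pd i (fun x => Real.exp (f x)) z = Real.exp (f z) * pd i f z := by
  unfold pd
  rw [(hf.hasFDerivAt.exp).fderiv]
  simp

lemma pd_inv (hg : DifferentiableAt ℝ g z) (h0 : g z ≠ 0) :
    pd i (fun x => (g x)⁻¹) z = -(pd i g z) / g z ^ 2 := by
  unfold pd
  have h := (hasDerivAt_inv h0).comp_hasFDerivAt z hg.hasFDerivAt
  rw [show (fun x => (g x)⁻¹) = (fun y => y⁻¹) ∘ g from rfl, h.fderiv]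
  simp
  ring

lemma pd_div (hf : DifferentiableAt ℝ f z) (hg : DifferentiableAt ℝ g z) (h0 : g z ≠ 0) :
    pd i (fun x => f x / g x) z = (pd i f z * g z - f z * pd i g z) / g z ^ 2 := by
  simp only [div_eq_mul_inv]
  rw [pd_mul (g := fun x => (g x)⁻¹) hf (hg.inv h0), pd_inv hg h0]
  field_simp
  ring

lemma pd_add (hf : DifferentiableAt ℝ f z) (hg : DifferentiableAt ℝ g z) :
    pd i (fun x => f x + g x) z = pd i f z + pd i g z := by
  unfold pd
  rw [fderiv_fun_add hf hg]; simp

lemma pd_sub (hf : DifferentiableAt ℝ f z) (hg : DifferentiableAt ℝ g z) :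
    pd i (fun x => f x - g x) z = pd i f z - pd i g z := by
  unfold pd
  rw [fderiv_fun_sub hf hg]; simp

lemma pd_const (c : ℝ) : pd i (fun _ => c) z = 0 := by
  unfold pd; simp

lemma hasFDerivAt_linear (b : Fin n → ℝ) (w : Fin n → ℝ) :
    HasFDerivAt (fun x : Fin n → ℝ => ∑ j, b j * x j)
      (∑ j, b j • (ContinuousLinearMap.proj j : (Fin n → ℝ) →L[ℝ] ℝ)) w := by
  apply HasFDerivAt.fun_sum
  intro j _
  exact ((ContinuousLinearMap.proj j : (Fin n → ℝ) →L[ℝ] ℝ).hasFDerivAt).const_mul (b j)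

lemma differentiable_linear (b : Fin n → ℝ) :
    Differentiable ℝ (fun x : Fin n → ℝ => ∑ j, b j * x j) :=
  fun w => (hasFDerivAt_linear b w).differentiableAt

lemma pd_linear (b : Fin n → ℝ) :
    pd i (fun x : Fin n → ℝ => ∑ j, b j * x j) z = b i := by
  unfold pd
  rw [(hasFDerivAt_linear b z).fderiv]
  simp [Pi.single_apply]

lemma diffAt_div (hf : DifferentiableAt ℝ f z) (hg : DifferentiableAt ℝ g z)
    (h0 : g z ≠ 0) : DifferentiableAt ℝ (fun x => f x / g x) z := by
  simp only [div_eq_mul_inv]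
  exact hf.mul (hg.inv h0)

lemma contDiffOn_pd {U : Set (Fin n → ℝ)} (hU : IsOpen U) (hf : ContDiffOn ℝ (⊤ : ℕ∞) f U)
    (i : Fin n) : ContDiffOn ℝ (⊤ : ℕ∞) (pd i f) U :=
  (hf.fderiv_of_isOpen hU (by simp)).clm_apply contDiffOn_const

end rules

set_option maxHeartbeats 2000000 in
/-- formula (2.3) of the paper with ρ = 0: third derivatives of
the exponential change `*L = L e^τ`:
`∂ᵢ∂ⱼ∂ₖ(*L) = e^τ(1−τ)Lᵢⱼₖ − τ(e^τ/L)[mᵢLⱼₖ + mⱼLᵢₖ + mₖLᵢⱼ]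
  − (e^τ/L²)[mⱼmₖlᵢ + mᵢmₖlⱼ + mᵢmⱼlₖ − mᵢmⱼmₖ]`. -/
theorem exp_change_third_deriv {n : ℕ} (L : (Fin n → ℝ) → ℝ) (b : Fin n → ℝ)
    (β : (Fin n → ℝ) → ℝ)
    (hsmooth : ContDiffOn ℝ (⊤ : ℕ∞) L {y : Fin n → ℝ | y ≠ 0})
    (hpos : ∀ y : Fin n → ℝ, y ≠ 0 → 0 < L y)
    (hhom : ∀ y : Fin n → ℝ, y ≠ 0 → ∀ lam : ℝ, 0 < lam → L (lam • y) = lam * L y)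
    (hβ : ∀ y : Fin n → ℝ, β y = ∑ i, b i * y i) :
    ∀ y : Fin n → ℝ, y ≠ 0 → ∀ i j k : Fin n,
      let τ := β y / L y
      let l := fun i : Fin n => pd i L y
      let m := fun i : Fin n => b i - τ * l i
      pd3 i j k (fun z => L z * Real.exp (β z / L z)) y
        = Real.exp τ * (1 - τ) * pd3 i j k L y
          - τ * (Real.exp τ / L y) *
              (m i * pd2 j k L y + m j * pd2 i k L y + m k * pd2 i j L y)
          - (Real.exp τ / (L y) ^ 2) *
              (m j * m k * l i + m i * m k * l j + m i * m j * l k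
                - m i * m j * m k) := by
  intro y hy i j k
  intro τ l m
  set U : Set (Fin n → ℝ) := {y : Fin n → ℝ | y ≠ 0} with hUdef
  have hU : IsOpen U := isOpen_ne
  have hyU : y ∈ U := hy
  have hβe : β = fun x : Fin n → ℝ => ∑ j, b j * x j := funext hβ
  have dβ : Differentiable ℝ β := by rw [hβe]; exact differentiable_linear b
  have hpdβ : ∀ (z : Fin n → ℝ) (a : Fin n), pd a β z = b a := by
    intro z a; rw [hβe]; exact pd_linear b
  -- differentiability extraction
  have dAt : ∀ (f : (Fin n → ℝ) → ℝ), ContDiffOn ℝ (⊤ : ℕ∞) f U → ∀ z ∈ U,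
      DifferentiableAt ℝ f z := fun f hf z hz =>
    (hf.contDiffAt (hU.mem_nhds hz)).differentiableAt (by simp)
  have hL1 : ∀ a : Fin n, ContDiffOn ℝ (⊤ : ℕ∞) (pd a L) U := fun a => contDiffOn_pd hU hsmooth a
  have hL2 : ∀ a c : Fin n, ContDiffOn ℝ (⊤ : ℕ∞) (pd a (pd c L)) U :=
    fun a c => contDiffOn_pd hU (hL1 c) a
  have dL : ∀ z ∈ U, DifferentiableAt ℝ L z := dAt L hsmooth
  have dL1 : ∀ (a : Fin n), ∀ z ∈ U, DifferentiableAt ℝ (pd a L) z := fun a => dAt _ (hL1 a)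
  have dL2 : ∀ (a c : Fin n), ∀ z ∈ U, DifferentiableAt ℝ (pd a (pd c L)) z :=
    fun a c => dAt _ (hL2 a c)
  have hL0 : ∀ z ∈ U, L z ≠ 0 := fun z hz => (hpos z hz).ne'
  have dT : ∀ z ∈ U, DifferentiableAt ℝ (fun x => β x / L x) z :=
    fun z hz => diffAt_div (dβ z) (dL z hz) (hL0 z hz)
  -- the step functions
  set G : (Fin n → ℝ) → ℝ := fun z =>
    Real.exp (β z / L z) * (pd k L z + (b k - β z / L z * pd k L z)) with hGdef
  set H : (Fin n → ℝ) → ℝ := fun z =>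
    Real.exp (β z / L z) * ((1 - β z / L z) * pd j (pd k L) z
      + (b j - β z / L z * pd j L z) * (b k - β z / L z * pd k L z) / L z) with hHdef
  -- Step 1
  have step1 : ∀ z ∈ U, pd k (fun x => L x * Real.exp (β x / L x)) z = G z := by
    intro z hz
    rw [pd_mul (dL z hz) ((dT z hz).exp), pd_exp (dT z hz),
      pd_div (dβ z) (dL z hz) (hL0 z hz), hpdβ]
    rw [hGdef]
    have h0 := hL0 z hz
    field_simp
  -- Step 2
  have step2 : ∀ z ∈ U, pd j G z = H z := by
    intro z hz
    have h0 := hL0 z hz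
    have dmk : DifferentiableAt ℝ (fun x => β x / L x * pd k L x) z :=
      (dT z hz).mul (dL1 k z hz)
    have dinner : DifferentiableAt ℝ (fun x => pd k L x + (b k - β x / L x * pd k L x)) z :=
      (dL1 k z hz).add ((differentiableAt_const _).sub dmk)
    rw [hGdef]
    rw [pd_mul ((dT z hz).exp) dinner, pd_exp (dT z hz),
      pd_add (dL1 k z hz) ((differentiableAt_const _).fun_sub dmk),
      pd_sub (differentiableAt_const _) dmk,
      pd_mul (dT z hz) (dL1 k z hz),
      pd_div (dβ z) (dL z hz) h0, hpdβ, pd_const]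
    rw [hHdef]
    field_simp
    ring
  -- Step 3
  have step3 : pd i H y =
      Real.exp τ * (1 - τ) * pd i (pd j (pd k L)) y
        - τ * (Real.exp τ / L y) *
            (m i * pd j (pd k L) y + m j * pd i (pd k L) y + m k * pd i (pd j L) y)
        - (Real.exp τ / (L y) ^ 2) *
            (m j * m k * l i + m i * m k * l j + m i * m j * l k
              - m i * m j * m k) := by
    have h0 := hL0 y hyU
    have dTy := dT y hyU
    have dmj : DifferentiableAt ℝ (fun x => β x / L x * pd j L x) y :=
      dTy.mul (dL1 j y hyU)
    have dmk : DifferentiableAt ℝ (fun x => β x / L x * pd k L x) y :=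
      dTy.mul (dL1 k y hyU)
    have dMj : DifferentiableAt ℝ (fun x => b j - β x / L x * pd j L x) y :=
      (differentiableAt_const _).sub dmj
    have dMk : DifferentiableAt ℝ (fun x => b k - β x / L x * pd k L x) y :=
      (differentiableAt_const _).sub dmk
    have dP1 : DifferentiableAt ℝ (fun x => (1 - β x / L x) * pd j (pd k L) x) y :=
      ((differentiableAt_const _).sub dTy).mul (dL2 j k y hyU)
    have dP2 : DifferentiableAt ℝ
        (fun x => (b j - β x / L x * pd j L x) * (b k - β x / L x * pd k L x)) y :=
      dMj.mul dMk
    have dP3 : DifferentiableAt ℝ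
        (fun x => (b j - β x / L x * pd j L x) * (b k - β x / L x * pd k L x) / L x) y :=
      diffAt_div dP2 (dL y hyU) h0
    rw [hHdef]
    rw [pd_mul (dTy.exp) (dP1.fun_add dP3), pd_exp dTy,
      pd_add dP1 dP3,
      pd_mul ((differentiableAt_const _).fun_sub dTy) (dL2 j k y hyU),
      pd_sub (differentiableAt_const _) dTy,
      pd_div dP2 (dL y hyU) h0,
      pd_mul dMj dMk,
      pd_sub (differentiableAt_const _) dmj,
      pd_sub (differentiableAt_const _) dmk,
      pd_mul dTy (dL1 j y hyU),
      pd_mul dTy (dL1 k y hyU),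
      pd_div (dβ y) (dL y hyU) h0, hpdβ, pd_const, pd_const, pd_const]
    simp only [τ, m, l]
    field_simp
    ring
  -- chain everything
  have e1 : ∀ z ∈ U, pd j (pd k (fun x => L x * Real.exp (β x / L x))) z = pd j G z :=
    fun z hz => pd_congr_on hU step1 hz j
  have e2 : ∀ z ∈ U, pd j (pd k (fun x => L x * Real.exp (β x / L x))) z = H z :=
    fun z hz => (e1 z hz).trans (step2 z hz)
  have e3 : pd i (pd j (pd k (fun x => L x * Real.exp (β x / L x)))) y = pd i H y :=
    pd_congr_on hU e2 hyU i
  simp only [pd3, pd2]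
  rw [e3, step3]
end

section
/- Let g be an inner product (invertible symmetric bilinear form) on ℝⁿ, l a vector with g(l,l)=1, m with g(m,l)=0, ν ≠ 0 real, and m² = g(m,m) with m² + ν ≠ 0. Then the linear map A ↦ ν(A − g(l,A)l) + g(m,A)m has kernel exactly the span of l, and the map A ↦ (ν(A − g(l,A)l) + g(m,A)m, g(l,A) + g(m,A)) ∈ ℝⁿ × ℝ is injective. -/
open Matrix

/-!
With `φ = g(l, ·)` and `ψ = g(m, ·)`, pairing `T A` with `ψ` gives `ψ (T A) = (ν + ψ m) ψ A`,
because `ψ l = 0`. So on the kernel `ψ A = 0`, and then `ν ≠ 0` forces `A = φ A • l`; conversely `T l = 0` since `φ l = 1`.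
If moreover `φ A + ψ A = 0`, writing `A = c • l` gives `c = φ A + ψ A = 0`.
-/

section

variable {K V : Type*} [Field K] [AddCommGroup V] [Module K V]

/-- The paper's `T = ν (g − l ⊗ l) + m ⊗ m`. -/
def singularOp (φ ψ : V →ₗ[K] K) (l m : V) (ν : K) : V →ₗ[K] V :=
  ν • (LinearMap.id - φ.smulRight l) + ψ.smulRight m

variable {φ ψ : V →ₗ[K] K} {l m : V} {ν : K}

theorem singularOp_apply (A : V) :
    singularOp φ ψ l m ν A = ν • (A - φ A • l) + ψ A • m := rfl

theorem apply_singularOp (hψl : ψ l = 0) (A : V) :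
    ψ (singularOp φ ψ l m ν A) = (ν + ψ m) * ψ A := by
  simp only [singularOp_apply, map_add, map_smul, map_sub, hψl, smul_eq_mul]
  ring

theorem singularOp_smul_self (hφl : φ l = 1) (hψl : ψ l = 0) (c : K) :
    singularOp φ ψ l m ν (c • l) = 0 := by
  simp [singularOp_apply, hφl, hψl]

theorem ker_singularOp (hφl : φ l = 1) (hψl : ψ l = 0) (hν : ν ≠ 0) (hψm : ψ m + ν ≠ 0) :
    LinearMap.ker (singularOp φ ψ l m ν) = K ∙ l := by
  ext A
  rw [LinearMap.mem_ker, Submodule.mem_span_singleton]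
  constructor
  · intro hA
    have hψA : ψ A = 0 := by
      have h := apply_singularOp (φ := φ) (m := m) (ν := ν) hψl A
      rw [hA, map_zero] at h
      exact (mul_eq_zero.mp h.symm).resolve_left (by rwa [add_comm])
    rw [singularOp_apply, hψA, zero_smul, add_zero, smul_eq_zero, sub_eq_zero] at hA
    exact ⟨φ A, (hA.resolve_left hν).symm⟩
  · rintro ⟨c, rfl⟩
    exact singularOp_smul_self hφl hψl c

theorem injective_singularOp_prod (hφl : φ l = 1) (hψl : ψ l = 0) (hν : ν ≠ 0)
    (hψm : ψ m + ν ≠ 0) : Function.Injective ((singularOp φ ψ l m ν).prod (φ + ψ)) := by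
  rw [← LinearMap.ker_eq_bot, LinearMap.ker_prod, ker_singularOp hφl hψl hν hψm, eq_bot_iff]
  rintro A ⟨hA, hφψA⟩
  obtain ⟨c, rfl⟩ := Submodule.mem_span_singleton.mp hA
  have hc : c = 0 := by simpa [hφl, hψl] using hφψA
  rw [Submodule.mem_bot, hc, zero_smul]

end

theorem augmented_operator_injective_general {n : ℕ} (g : Matrix (Fin n) (Fin n) ℝ)
    (l m : Fin n → ℝ) (ν : ℝ)
    (hll : l ⬝ᵥ (g *ᵥ l) = 1) (hml : m ⬝ᵥ (g *ᵥ l) = 0)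
    (hν : ν ≠ 0) (hm2ν : m ⬝ᵥ (g *ᵥ m) + ν ≠ 0) :
    (∀ A : Fin n → ℝ,
        ν • (A - (l ⬝ᵥ (g *ᵥ A)) • l) + (m ⬝ᵥ (g *ᵥ A)) • m = 0
          ↔ ∃ c : ℝ, A = c • l) ∧
    Function.Injective (fun A : Fin n → ℝ =>
      (ν • (A - (l ⬝ᵥ (g *ᵥ A)) • l) + (m ⬝ᵥ (g *ᵥ A)) • m,
        l ⬝ᵥ (g *ᵥ A) + m ⬝ᵥ (g *ᵥ A))) := by
  set φ : (Fin n → ℝ) →ₗ[ℝ] ℝ := toLinearMap₂' ℝ g l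
  set ψ : (Fin n → ℝ) →ₗ[ℝ] ℝ := toLinearMap₂' ℝ g m
  have hφ : ∀ A, φ A = l ⬝ᵥ (g *ᵥ A) := toLinearMap₂'_apply' g l
  have hψ : ∀ A, ψ A = m ⬝ᵥ (g *ᵥ A) := toLinearMap₂'_apply' g m
  have hφl : φ l = 1 := (hφ l).trans hll
  have hψl : ψ l = 0 := (hψ l).trans hml
  have hψm : ψ m + ν ≠ 0 := by rwa [hψ]
  constructor
  · intro A
    simpa [singularOp_apply, hφ, hψ, Submodule.mem_span_singleton, eq_comm] using
      SetLike.ext_iff.mp (ker_singularOp hφl hψl hν hψm) A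
  · convert injective_singularOp_prod hφl hψl hν hψm using 1
    funext A
    simp [singularOp_apply, hφ, hψ]

/-- abstract core of Lemma 3.1: for an invertible symmetric
bilinear form `g` on `ℝⁿ`, `g(l,l) = 1`, `g(m,l) = 0`, `ν ≠ 0`,
`m² + ν ≠ 0`, the map `T(A) = ν(A − g(l,A)l) + g(m,A)m` has kernel exactly
`span {l}`, and `A ↦ (T A, g(l,A) + g(m,A))` is injective. -/
theorem augmented_operator_injective {n : ℕ} (g : Matrix (Fin n) (Fin n) ℝ)
    (hsymm : g.IsSymm) (hdet : IsUnit g.det)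
    (l m : Fin n → ℝ) (ν : ℝ)
    (hll : l ⬝ᵥ (g *ᵥ l) = 1) (hml : m ⬝ᵥ (g *ᵥ l) = 0)
    (hν : ν ≠ 0) (hm2ν : m ⬝ᵥ (g *ᵥ m) + ν ≠ 0) :
    (∀ A : Fin n → ℝ,
        ν • (A - (l ⬝ᵥ (g *ᵥ A)) • l) + (m ⬝ᵥ (g *ᵥ A)) • m = 0
          ↔ ∃ c : ℝ, A = c • l) ∧
    Function.Injective (fun A : Fin n → ℝ =>
      (ν • (A - (l ⬝ᵥ (g *ᵥ A)) • l) + (m ⬝ᵥ (g *ᵥ A)) • m,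
        l ⬝ᵥ (g *ᵥ A) + m ⬝ᵥ (g *ᵥ A))) :=
  augmented_operator_injective_general g l m ν hll hml hν hm2ν
end

section
/- Inverse metric of the exponential change: with *gᵢⱼ as in the exponential change formula (ρ = 0, ν = 1−τ), assuming ν ≠ 0 and m² + ν ≠ 0, the inverse satisfies *gⁱʲ = (e^{−2τ}/ν)[gⁱʲ − (m²+ν)⁻¹bⁱbʲ + (τ−ν)(m²+ν)⁻¹(bⁱlʲ + bʲlⁱ) − lⁱlʲ{(τ−ν)(m²+ν)⁻¹(m²+τ)}], i.e. Σⱼ *gⁱʲ·*gⱼₖ = δⁱₖ. -/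
/-!
Up to the scalars `e^{2τ}` and `e^{-2τ} / (ν (m² + ν))`, `*gᵢⱼ` and `*gⁱʲ` are rank-two
corrections of `ν g` and `(m² + ν) g⁻¹` by dyads of the covariant, resp. contravariant, vectors
`l` and `b`. Expanding their product with `g⁻¹ g = 1` leaves the identity and the four dyads
`xⁱ yⱼ` (`x, y ∈ {l, b}`), with coefficients depending only on the Gram values `g(l,l) = 1`,
`g(l,b) = τ`, `g(b,b) = m² + τ²`; the dyad coefficients cancel and the identity gets `ν (m² + ν)`.
-/

open Matrix

section

variable {ι 𝕜 : Type*} [Fintype ι] [CommRing 𝕜]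

theorem Matrix.IsSymm.vecMul_eq_mulVec {g : Matrix ι ι 𝕜} (hg : g.IsSymm) (x : ι → 𝕜) :
    x ᵥ* g = g *ᵥ x := by
  rw [← mulVec_transpose, hg]

theorem Matrix.IsSymm.dotProduct_mulVec_comm {g : Matrix ι ι 𝕜} (hg : g.IsSymm) (x y : ι → 𝕜) :
    x ⬝ᵥ g *ᵥ y = y ⬝ᵥ g *ᵥ x := by
  rw [dotProduct_mulVec, hg.vecMul_eq_mulVec, dotProduct_comm]

/-- `e^{-2τ} *gᵢⱼ`, in terms of the contravariant vectors `lⁱ` and `bⁱ`. -/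
def reducedExpChange (g : Matrix ι ι 𝕜) (l b : ι → 𝕜) (τ : 𝕜) : Matrix ι ι 𝕜 :=
  (1 - τ) • g + (2 * τ ^ 2 - τ) • vecMulVec (g *ᵥ l) (g *ᵥ l)
    + (1 - 2 * τ) • (vecMulVec (g *ᵥ b) (g *ᵥ l) + vecMulVec (g *ᵥ l) (g *ᵥ b))
    + (2 : 𝕜) • vecMulVec (g *ᵥ b) (g *ᵥ b)

/-- `ν (m² + ν) e^{2τ} *gⁱʲ` with `ν = 1 - τ`, `μ = m²` and `g'` in place of `g⁻¹`. -/
def reducedExpChangeInv (g' : Matrix ι ι 𝕜) (l b : ι → 𝕜) (τ μ : 𝕜) : Matrix ι ι 𝕜 :=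
  (μ + (1 - τ)) • g' - vecMulVec b b + (2 * τ - 1) • (vecMulVec b l + vecMulVec l b)
    - ((2 * τ - 1) * (μ + τ)) • vecMulVec l l

theorem reducedExpChangeInv_mul_reducedExpChange [DecidableEq ι] {g g' : Matrix ι ι 𝕜}
    (hg : g.IsSymm) (hg' : g' * g = 1) {l b : ι → 𝕜} {τ μ : 𝕜}
    (hll : l ⬝ᵥ g *ᵥ l = 1) (hlb : l ⬝ᵥ g *ᵥ b = τ) (hbb : b ⬝ᵥ g *ᵥ b = μ + τ ^ 2) :
    reducedExpChangeInv g' l b τ μ * reducedExpChange g l b τ = ((1 - τ) * (μ + (1 - τ))) • 1 := by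
  have hbl : b ⬝ᵥ g *ᵥ l = τ := by rw [hg.dotProduct_mulVec_comm, hlb]
  have hg'g (x : ι → 𝕜) : g' *ᵥ g *ᵥ x = x := by rw [mulVec_mulVec, hg', one_mulVec]
  simp only [reducedExpChangeInv, reducedExpChange, add_mul, sub_mul, mul_add, smul_mul_assoc,
    mul_smul_comm, mul_vecMulVec g', vecMulVec_mul, vecMul_vecMulVec, hg', hg'g,
    hg.vecMul_eq_mulVec, hll, hlb, hbl, hbb, vecMulVec_smul, one_smul, smul_add]
  module

end

/-- formula (2.7) of the paper, ρ = 0, ν = 1−τ, as a matrix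
identity: the displayed expression `*gⁱʲ` is an inverse of the exponentially
changed metric tensor `*gᵢⱼ`, i.e. `Σⱼ *gⁱʲ *gⱼₖ = δⁱₖ`. -/
theorem exp_change_inverse_metric {n : ℕ} (g : Matrix (Fin n) (Fin n) ℝ)
    (hsymm : g.IsSymm) (hdet : IsUnit g.det)
    (l m : Fin n → ℝ) (τ : ℝ)
    (hll : l ⬝ᵥ (g *ᵥ l) = 1) (hml : m ⬝ᵥ (g *ᵥ l) = 0)
    (hν : (1 : ℝ) - τ ≠ 0) (hm2ν : m ⬝ᵥ (g *ᵥ m) + (1 - τ) ≠ 0) :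
    let ν : ℝ := 1 - τ
    let m2 : ℝ := m ⬝ᵥ (g *ᵥ m)
    let b : Fin n → ℝ := m + τ • l               -- contravariant components bⁱ
    let lo : Fin n → ℝ := g *ᵥ l                 -- covariant lᵢ
    let bo : Fin n → ℝ := g *ᵥ b                 -- covariant bᵢ
    let starg : Matrix (Fin n) (Fin n) ℝ := Matrix.of fun i j =>
      ν * Real.exp (2 * τ) * g i j
        + Real.exp (2 * τ) * (2 * τ ^ 2 - τ) * lo i * lo j
        + Real.exp (2 * τ) * (1 - 2 * τ) * (bo i * lo j + bo j * lo i)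
        + 2 * Real.exp (2 * τ) * bo i * bo j
    let starginv : Matrix (Fin n) (Fin n) ℝ := Matrix.of fun i j =>
      (Real.exp (-(2 * τ)) / ν) *
        (g⁻¹ i j - (m2 + ν)⁻¹ * b i * b j
          + (τ - ν) * (m2 + ν)⁻¹ * (b i * l j + b j * l i)
          - l i * l j * ((τ - ν) * (m2 + ν)⁻¹ * (m2 + τ)))
    starginv * starg = 1 := by
  intro ν m2 b lo bo starg starginv
  have hlm : l ⬝ᵥ g *ᵥ m = 0 := by rw [hsymm.dotProduct_mulVec_comm, hml]
  have hlb : l ⬝ᵥ g *ᵥ b = τ := by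
    simp only [b, mulVec_add, mulVec_smul, dotProduct_add, dotProduct_smul, hlm, hll, smul_eq_mul]
    ring
  have hbb : b ⬝ᵥ g *ᵥ b = m2 + τ ^ 2 := by
    simp only [b, mulVec_add, mulVec_smul, add_dotProduct, dotProduct_add, smul_dotProduct,
      dotProduct_smul, hlm, hll, hml, m2, smul_eq_mul]
    ring
  have hstarg : starg = Real.exp (2 * τ) • reducedExpChange g l b τ := by
    ext i j
    simp only [starg, lo, bo, reducedExpChange, of_apply, Matrix.smul_apply, Matrix.add_apply,
      smul_eq_mul, vecMulVec_apply]
    ring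
  have hstarginv :
      starginv = (Real.exp (-(2 * τ)) / (ν * (m2 + ν))) • reducedExpChangeInv g⁻¹ l b τ m2 := by
    ext i j
    simp only [starginv, ν, m2, reducedExpChangeInv, of_apply, Matrix.smul_apply,
      Matrix.sub_apply, Matrix.add_apply, smul_eq_mul, vecMulVec_apply]
    field_simp
    ring
  rw [hstarginv, hstarg, smul_mul_smul_comm,
    reducedExpChangeInv_mul_reducedExpChange hsymm (nonsing_inv_mul g hdet) hll hlb hbb, smul_smul]
  convert one_smul ℝ (1 : Matrix (Fin n) (Fin n) ℝ)
  simp only [ν, m2, Real.exp_neg]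
  field_simp
end
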